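/- Let R = C[x1,x2,x3] ⊗ Λ(η1,η2,η3) with operators D12 = ∂_{x3}∂_{η3} + ∂_{x1}∂_{η2} − ∂_{x2}∂_{η1} and D22 = ∂_{x3}² + 2∂_{η1}∂_{η2}. Then the element ṽ = x1 x3 η2 − x2 x3 η1 − x3² η3 − η1 η2 η3 of degree 3 satisfies D12 ṽ = 0 and D22 ṽ = 0. -/
import Mathlib


open scoped TensorProduct

noncomputable section

/-- Polynomial part `ℂ[x₁,…,x_m]`. -/
abbrev PolyPart (m : ℕ) := MvPolynomial (Fin m) ℂ

/-- Exterior part `Λ(η₁,…,η_m)`. -/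
abbrev ExtPart (m : ℕ) := ExteriorAlgebra ℂ (Fin m → ℂ)

/-- The supersymmetric algebra `R = ℂ[x₁,…,x_m] ⊗ Λ(η₁,…,η_m)`. -/
abbrev SAlg (m : ℕ) := PolyPart m ⊗[ℂ] ExtPart m

/-- The even generator `x_i`. -/
def Xv {m : ℕ} (i : Fin m) : SAlg m := (MvPolynomial.X i) ⊗ₜ[ℂ] 1

/-- The odd generator `η_i`. -/
def ηv {m : ℕ} (i : Fin m) : SAlg m :=
  1 ⊗ₜ[ℂ] (ExteriorAlgebra.ι ℂ (Pi.single i 1))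

/-- The partial derivative `∂_{x_i}` (acting on the polynomial factor). -/
def dX {m : ℕ} (i : Fin m) : SAlg m →ₗ[ℂ] SAlg m :=
  LinearMap.rTensor (ExtPart m) (MvPolynomial.pderiv i).toLinearMap

/-- The odd left superderivation `∂_{η_i}` with `∂_{η_i}(η_j) = δ_{ij}`, realized as
left contraction of the exterior factor with the `i`-th coordinate functional. -/
def dη {m : ℕ} (i : Fin m) : SAlg m →ₗ[ℂ] SAlg m :=
  LinearMap.lTensor (PolyPart m)
    (CliffordAlgebra.contractLeft (LinearMap.proj i : (Fin m → ℂ) →ₗ[ℂ] ℂ))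

/-- Multiplication by `x_i`. -/
def mX {m : ℕ} (i : Fin m) : SAlg m →ₗ[ℂ] SAlg m := LinearMap.mulLeft ℂ (Xv i)

/-- Multiplication by `η_i`. -/
def mη {m : ℕ} (i : Fin m) : SAlg m →ₗ[ℂ] SAlg m := LinearMap.mulLeft ℂ (ηv i)

/-- The raising operator `D₁₂ = ∂_{x₃}∂_{η₃} + ∂_{x₁}∂_{η₂} − ∂_{x₂}∂_{η₁}` (n = 1). -/
def D12 : SAlg 3 →ₗ[ℂ] SAlg 3 :=
  dX 2 ∘ₗ dη 2 + dX 0 ∘ₗ dη 1 - dX 1 ∘ₗ dη 0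

/-- The raising operator `D₂₂ = ∂_{x₃}² + 2∂_{η₁}∂_{η₂}` (n = 1). -/
def D22 : SAlg 3 →ₗ[ℂ] SAlg 3 :=
  dX 2 ∘ₗ dX 2 + (2 : ℂ) • (dη 0 ∘ₗ dη 1)

/-- The extra harmonic vector `ṽ = x₁x₃η₂ − x₂x₃η₁ − x₃²η₃ − η₁η₂η₃`. -/
def vtilde : SAlg 3 :=
  Xv 0 * Xv 2 * ηv 1 - Xv 1 * Xv 2 * ηv 0 - (Xv 2) ^ 2 * ηv 2 - ηv 0 * ηv 1 * ηv 2


/-- Abbreviation for the exterior generators. -/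
abbrev eGen (i : Fin 3) : ExtPart 3 := ExteriorAlgebra.ι ℂ (Pi.single i 1)

lemma vtilde_eq : vtilde =
    (MvPolynomial.X 0 * MvPolynomial.X 2) ⊗ₜ[ℂ] eGen 1
    - (MvPolynomial.X 1 * MvPolynomial.X 2) ⊗ₜ[ℂ] eGen 0
    - (MvPolynomial.X 2 * MvPolynomial.X 2) ⊗ₜ[ℂ] eGen 2
    - (1 : PolyPart 3) ⊗ₜ[ℂ] (eGen 0 * (eGen 1 * eGen 2)) := by
  simp [vtilde, mul_assoc, Xv, ηv, Algebra.TensorProduct.tmul_mul_tmul, sq, eGen]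

lemma dX_tmul {m : ℕ} (i : Fin m) (p : PolyPart m) (x : ExtPart m) :
    dX i (p ⊗ₜ[ℂ] x) = (MvPolynomial.pderiv i p) ⊗ₜ[ℂ] x := rfl

lemma dη_tmul {m : ℕ} (i : Fin m) (p : PolyPart m) (x : ExtPart m) :
    dη i (p ⊗ₜ[ℂ] x) = p ⊗ₜ[ℂ]
      CliffordAlgebra.contractLeft (LinearMap.proj i : (Fin m → ℂ) →ₗ[ℂ] ℂ) x := rfl

/-- `ṽ` is annihilated by `D₁₂` and `D₂₂`. -/
theorem stmt2 : D12 vtilde = 0 ∧ D22 vtilde = 0 := by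
  constructor <;>
  · simp only [D12, D22, vtilde_eq, map_sub, LinearMap.sub_apply, LinearMap.add_apply,
      LinearMap.comp_apply, LinearMap.smul_apply, dη_tmul, dX_tmul,
      CliffordAlgebra.contractLeft_ι, CliffordAlgebra.contractLeft_ι_mul,
      CliffordAlgebra.contractLeft_one, map_smul, map_sub, map_zero,
      LinearMap.proj_apply, Pi.single_eq_same, Pi.single_eq_of_ne,
      MvPolynomial.pderiv_X, eGen]
    simp [Pi.single_apply, TensorProduct.smul_tmul', MvPolynomial.pderiv_X,
      Algebra.algebraMap_eq_smul_one, TensorProduct.tmul_sub]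
    simp [TensorProduct.add_tmul, two_mul, mul_comm, TensorProduct.smul_tmul', smul_smul]
    try simp only [TensorProduct.tmul_neg, two_smul, TensorProduct.add_tmul,
      TensorProduct.neg_tmul]
    try abel
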